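/- arXiv:1211.7115 — 2 statements merged into one kernel-verified Lean document; each statement's English description precedes it below -/
import Mathlib

section
/- Let (V, Δ, c) be a vertex coalgebra (coefficient form) and set D* := (Id ⊗ c) ∘ Δ_{−2}. Then for every q ∈ ℤ, (D* ⊗ Id) ∘ Δ_q = −q · Δ_{q−1} as maps V → V ⊗ V. -/
open TensorProduct

noncomputable section

/-- Generalized binomial coefficient `C(p,i) = p(p-1)⋯(p-i+1)/i!` as a complex number. -/
def cbin (p : ℤ) (i : ℕ) : ℂ :=
  (∏ k ∈ Finset.range i, ((p : ℂ) - (k : ℂ))) / (i.factorial : ℂ)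

variable {V : Type*} [AddCommGroup V] [Module ℂ V]

/-- The flip `T` on `V ⊗ V`, `T (u ⊗ w) = w ⊗ u`. -/
def Tflip : V ⊗[ℂ] V →ₗ[ℂ] V ⊗[ℂ] V := (TensorProduct.comm ℂ V V).toLinearMap

/-- `T ⊗ Id` acting on `V ⊗ (V ⊗ V)` (conjugated by the associator). -/
def TId : (V ⊗[ℂ] (V ⊗[ℂ] V)) →ₗ[ℂ] (V ⊗[ℂ] (V ⊗[ℂ] V)) :=
  (TensorProduct.assoc ℂ V V V).toLinearMap ∘ₗ
    (TensorProduct.map Tflip LinearMap.id) ∘ₗ (TensorProduct.assoc ℂ V V V).symm.toLinearMap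

/-- `(Δₙ ⊗ Id) ∘ Δₘ` as a map `V → V ⊗ (V ⊗ V)` (via the associator). -/
def DL (Δ : ℤ → V →ₗ[ℂ] V ⊗[ℂ] V) (n m : ℤ) : V →ₗ[ℂ] (V ⊗[ℂ] (V ⊗[ℂ] V)) :=
  (TensorProduct.assoc ℂ V V V).toLinearMap ∘ₗ (TensorProduct.map (Δ n) LinearMap.id) ∘ₗ Δ m

/-- `(Id ⊗ Δₙ) ∘ Δₘ` as a map `V → V ⊗ (V ⊗ V)`. -/
def DR (Δ : ℤ → V →ₗ[ℂ] V ⊗[ℂ] V) (n m : ℤ) : V →ₗ[ℂ] (V ⊗[ℂ] (V ⊗[ℂ] V)) :=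
  (TensorProduct.map LinearMap.id (Δ n)) ∘ₗ Δ m

/-- Truncation: for each `v` there is `N` with `Δₙ v = 0` for all `n ≤ N`. -/
def Truncation (Δ : ℤ → V →ₗ[ℂ] V ⊗[ℂ] V) : Prop :=
  ∀ v : V, ∃ N : ℤ, ∀ n ≤ N, Δ n v = 0

/-- `(Id ⊗ c)` composed with the canonical identification `V ⊗ ℂ ≅ V`. -/
def IdC (c : V →ₗ[ℂ] ℂ) : (V ⊗[ℂ] V) →ₗ[ℂ] V :=
  (TensorProduct.rid ℂ V).toLinearMap ∘ₗ TensorProduct.map LinearMap.id c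

/-- `(c ⊗ Id)` composed with the canonical identification `ℂ ⊗ V ≅ V`. -/
def CId (c : V →ₗ[ℂ] ℂ) : (V ⊗[ℂ] V) →ₗ[ℂ] V :=
  (TensorProduct.lid ℂ V).toLinearMap ∘ₗ TensorProduct.map c LinearMap.id

/-- Divided power `D*^{(i)} = (D*)^i / i!`. -/
def dpow (D : V →ₗ[ℂ] V) (i : ℕ) : V →ₗ[ℂ] V := ((i.factorial : ℂ)⁻¹) • (D ^ i)

/-- The Co-Borcherds identity at `(p,q,r)`. -/
def CoBorcherds (Δ : ℤ → V →ₗ[ℂ] V ⊗[ℂ] V) (p q r : ℤ) : Prop :=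
  ∀ v : V,
    (∑ᶠ i : ℕ, cbin p i • DL Δ (r + i) (p + q - i) v) =
      ∑ᶠ i : ℕ, ((-1 : ℂ) ^ i * cbin r i) •
        (DR Δ (q + i) (p + r - i) v - (-1 : ℂ) ^ r • TId (DR Δ (p + i) (q + r - i) v))

/-- Left counit: `(c ⊗ Id) ∘ Δₙ` is the identity for `n = -1` and zero otherwise. -/
def LeftCounit (Δ : ℤ → V →ₗ[ℂ] V ⊗[ℂ] V) (c : V →ₗ[ℂ] ℂ) : Prop :=
  CId c ∘ₗ Δ (-1) = LinearMap.id ∧ ∀ n : ℤ, n ≠ -1 → CId c ∘ₗ Δ n = 0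

/-- Cocreation: `(Id ⊗ c) ∘ Δₙ = 0` for `n ≥ 0` and `(Id ⊗ c) ∘ Δ₋₁ = Id`. -/
def Cocreation (Δ : ℤ → V →ₗ[ℂ] V ⊗[ℂ] V) (c : V →ₗ[ℂ] ℂ) : Prop :=
  (∀ n : ℤ, 0 ≤ n → IdC c ∘ₗ Δ n = 0) ∧ IdC c ∘ₗ Δ (-1) = LinearMap.id

/-- Exponential cocreation: `(Id ⊗ c) ∘ Δ₋₁₋ᵢ = D*^{(i)}` for all `i ≥ 0`,
and `(Id ⊗ c) ∘ Δₙ = 0` for all `n ≥ 0`. -/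
def ExpCocreation (Δ : ℤ → V →ₗ[ℂ] V ⊗[ℂ] V) (c : V →ₗ[ℂ] ℂ) (D : V →ₗ[ℂ] V) : Prop :=
  (∀ i : ℕ, IdC c ∘ₗ Δ (-1 - i) = dpow D i) ∧ ∀ n : ℤ, 0 ≤ n → IdC c ∘ₗ Δ n = 0

/-- The `D*` formula: `(D* ⊗ Id) ∘ Δ_q = -q • Δ_{q-1}`. -/
def DstFormula (Δ : ℤ → V →ₗ[ℂ] V ⊗[ℂ] V) (D : V →ₗ[ℂ] V) : Prop :=
  ∀ q : ℤ, TensorProduct.map D LinearMap.id ∘ₗ Δ q = (-(q : ℂ)) • Δ (q - 1)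

/-- Coefficient Co-Skew symmetry. -/
def CoSkew (Δ : ℤ → V →ₗ[ℂ] V ⊗[ℂ] V) (D : V →ₗ[ℂ] V) : Prop :=
  ∀ (r : ℤ) (v : V),
    {i : ℕ | Δ (r + i) (dpow D i v) ≠ 0}.Finite ∧
    Tflip (Δ r v) = ∑ᶠ i : ℕ, (-1 : ℂ) ^ (r + 1 + (i : ℤ)) • Δ (r + i) (dpow D i v)

/-- Coefficient Co-Commutator formula at `(p,q)`. -/
def CoCommutator (Δ : ℤ → V →ₗ[ℂ] V ⊗[ℂ] V) (p q : ℤ) : Prop :=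
  ∀ v : V,
    (∑ᶠ i : ℕ, cbin p i • DL Δ (i : ℤ) (p + q - i) v) = DR Δ q p v - TId (DR Δ p q v)

/-- Coefficient Co-Associator formula at `(q,r)`. -/
def CoAssociator (Δ : ℤ → V →ₗ[ℂ] V ⊗[ℂ] V) (q r : ℤ) : Prop :=
  ∀ v : V,
    DL Δ r q v =
      ∑ᶠ i : ℕ, ((-1 : ℂ) ^ i * cbin r i) •
        (DR Δ (q + i) (r - i) v - (-1 : ℂ) ^ r • TId (DR Δ (i : ℤ) (q + r - i) v))

lemma cbin_zero_right (p : ℤ) : cbin p 0 = 1 := by simp [cbin]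

lemma cbin_zero (i : ℕ) (hi : i ≠ 0) : cbin (0:ℤ) i = 0 := by
  unfold cbin
  rw [Finset.prod_eq_zero (i := 0) (Finset.mem_range.2 (Nat.pos_of_ne_zero hi)) (by simp)]
  simp

lemma prod_neg_two (i : ℕ) :
    (∏ k ∈ Finset.range i, ((-2:ℂ) - (k:ℂ))) = (-1:ℂ)^i * ((i+1).factorial : ℂ) := by
  induction i with
  | zero => simp
  | succ n ih =>
    rw [Finset.prod_range_succ, ih, Nat.factorial_succ (n+1)]
    push_cast
    ring

lemma cbin_neg_two (i : ℕ) : cbin (-2) i = (-1:ℂ)^i * (i+1) := by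
  have h1 : (i.factorial : ℂ) ≠ 0 := by exact_mod_cast i.factorial_ne_zero
  unfold cbin
  push_cast [prod_neg_two i, Nat.factorial_succ]
  field_simp

lemma L_assoc (c : V →ₗ[ℂ] ℂ) :
    (TensorProduct.map LinearMap.id (CId c)) ∘ₗ (TensorProduct.assoc ℂ V V V).toLinearMap =
      TensorProduct.map (IdC c) (LinearMap.id : V →ₗ[ℂ] V) := by
  apply TensorProduct.ext
  apply TensorProduct.ext
  ext b e d
  simp only [CId, IdC, LinearMap.coe_comp, Function.comp_apply, LinearEquiv.coe_coe,
    TensorProduct.map_tmul, TensorProduct.assoc_tmul, TensorProduct.lid_tmul,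
    TensorProduct.rid_tmul, LinearMap.id_coe, id_eq, LinearMap.compr₂_apply, LinearMap.compr₂ₛₗ_apply, TensorProduct.curry_apply,
    TensorProduct.AlgebraTensorModule.curry_apply, LinearMap.restrictScalars_apply,
    TensorProduct.mk_apply, TensorProduct.tmul_smul, TensorProduct.smul_tmul']

lemma L_TId (c : V →ₗ[ℂ] ℂ) :
    (TensorProduct.map (LinearMap.id : V →ₗ[ℂ] V) (CId c)) ∘ₗ (TId : (V ⊗[ℂ] (V ⊗[ℂ] V)) →ₗ[ℂ] _) =
      (TensorProduct.lid ℂ (V ⊗[ℂ] V)).toLinearMap ∘ₗ TensorProduct.map c LinearMap.id := by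
  apply TensorProduct.ext
  ext a b d
  simp only [TId, CId, Tflip, LinearMap.coe_comp, Function.comp_apply, LinearEquiv.coe_coe,
    TensorProduct.map_tmul, TensorProduct.assoc_tmul, TensorProduct.assoc_symm_tmul,
    TensorProduct.comm_tmul, TensorProduct.lid_tmul, LinearMap.id_coe, id_eq,
    LinearMap.compr₂_apply, LinearMap.compr₂ₛₗ_apply, TensorProduct.curry_apply,
    TensorProduct.AlgebraTensorModule.curry_apply, LinearMap.restrictScalars_apply, TensorProduct.mk_apply, TensorProduct.tmul_smul,
    TensorProduct.smul_tmul']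

lemma lid_map_c (c : V →ₗ[ℂ] ℂ) (f : V →ₗ[ℂ] V ⊗[ℂ] V) :
    ((TensorProduct.lid ℂ (V ⊗[ℂ] V)).toLinearMap ∘ₗ TensorProduct.map c LinearMap.id) ∘ₗ
        TensorProduct.map (LinearMap.id : V →ₗ[ℂ] V) f = f ∘ₗ CId c := by
  apply TensorProduct.ext'
  intro a w
  simp only [CId, LinearMap.coe_comp, Function.comp_apply, LinearEquiv.coe_coe,
    TensorProduct.map_tmul, TensorProduct.lid_tmul, LinearMap.id_coe, id_eq, map_smul]

lemma L_DL (Δ : ℤ → V →ₗ[ℂ] V ⊗[ℂ] V) (c : V →ₗ[ℂ] ℂ) (n m : ℤ) :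
    TensorProduct.map LinearMap.id (CId c) ∘ₗ DL Δ n m =
      TensorProduct.map (IdC c ∘ₗ Δ n) LinearMap.id ∘ₗ Δ m := by
  unfold DL
  rw [← LinearMap.comp_assoc, ← LinearMap.comp_assoc, L_assoc, ← TensorProduct.map_comp,
    LinearMap.id_comp]

lemma L_DR {Δ : ℤ → V →ₗ[ℂ] V ⊗[ℂ] V} {c : V →ₗ[ℂ] ℂ} (hcu : LeftCounit Δ c) (n m : ℤ) (v : V) :
    TensorProduct.map LinearMap.id (CId c) (DR Δ n m v) =
      if n = -1 then Δ m v else 0 := by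
  have : TensorProduct.map (LinearMap.id : V →ₗ[ℂ] V) (CId c) ∘ₗ DR Δ n m =
      TensorProduct.map LinearMap.id (CId c ∘ₗ Δ n) ∘ₗ Δ m := by
    unfold DR
    rw [← LinearMap.comp_assoc, ← TensorProduct.map_comp, LinearMap.id_comp]
  have h2 := congrArg (fun f => f v) this
  simp only [LinearMap.comp_apply] at h2
  rw [h2]
  split_ifs with h
  · subst h; rw [hcu.1, TensorProduct.map_id]; rfl
  · rw [hcu.2 n h]
    have : TensorProduct.map (LinearMap.id : V →ₗ[ℂ] V) (0 : V →ₗ[ℂ] V) = 0 := by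
      apply TensorProduct.ext'; intro a w; simp
    rw [this]; rfl

lemma L_TId_DR {Δ : ℤ → V →ₗ[ℂ] V ⊗[ℂ] V} {c : V →ₗ[ℂ] ℂ} (hcu : LeftCounit Δ c)
    (n m : ℤ) (v : V) :
    TensorProduct.map LinearMap.id (CId c) (TId (DR Δ n m v)) =
      if m = -1 then Δ n v else 0 := by
  have : (TensorProduct.map (LinearMap.id : V →ₗ[ℂ] V) (CId c) ∘ₗ TId) ∘ₗ DR Δ n m =
      (Δ n ∘ₗ CId c) ∘ₗ Δ m := by
    unfold DR
    rw [L_TId, ← LinearMap.comp_assoc, lid_map_c]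
  have h2 := congrArg (fun f => f v) this
  simp only [LinearMap.comp_apply] at h2
  rw [h2]
  split_ifs with h
  · subst h
    have := congrArg (fun f => f v) hcu.1
    simp only [LinearMap.comp_apply] at this
    rw [this]; rfl
  · have := congrArg (fun f => f v) (hcu.2 m h)
    simp only [LinearMap.comp_apply] at this
    rw [this]; simp

theorem dstFormula_of_vertexCoalgebra (Δ : ℤ → V →ₗ[ℂ] V ⊗[ℂ] V) (c : V →ₗ[ℂ] ℂ)
    (hcu : LeftCounit Δ c) (hcc : Cocreation Δ c) (htr : Truncation Δ)
    (hB : ∀ p q r : ℤ, CoBorcherds Δ p q r) :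
    ∀ q : ℤ,
      TensorProduct.map (IdC c ∘ₗ Δ (-2)) LinearMap.id ∘ₗ Δ q = (-(q : ℂ)) • Δ (q - 1) := by
  intro q
  apply LinearMap.ext
  intro v
  set L : (V ⊗[ℂ] (V ⊗[ℂ] V)) →ₗ[ℂ] V ⊗[ℂ] V :=
    TensorProduct.map LinearMap.id (CId c) with hLdef
  -- Borcherds at (0, q, -2)
  have hBv := hB 0 q (-2) v
  rw [finsum_eq_single _ 0 (fun x hx => by rw [cbin_zero x hx, zero_smul])] at hBv
  norm_num [cbin_zero_right] at hBv
  -- hBv : DL Δ (-2) q v = ∑ᶠ i, ...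
  set g : ℕ → V ⊗[ℂ] (V ⊗[ℂ] V) := fun i =>
    ((-1 : ℂ) ^ i * cbin (-2) i) •
      (DR Δ (q + i) (-2 - i) v - TId (DR Δ (i : ℤ) (q + -2 - i) v)) with hgdef
  obtain ⟨N, hN⟩ := htr v
  have hgfin : (Function.support g).Finite := by
    apply Set.Finite.subset (Set.finite_Iio ((max (-2 - N) (q - 2 - N)).toNat + 1))
    intro i hi
    simp only [Set.mem_Iio]
    by_contra hc2
    push_neg at hc2
    apply hi
    have h1 : (-2 : ℤ) - i ≤ N := by omega
    have h2 : q + -2 - i ≤ N := by omega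
    simp only [hgdef, DR, LinearMap.comp_apply, hN _ h1, hN _ h2, map_zero, smul_zero,
      sub_zero, Function.comp]
  have lhs_eq : (TensorProduct.map (IdC c ∘ₗ Δ (-2)) LinearMap.id ∘ₗ Δ q) v =
      L (DL Δ (-2) q v) := by
    have h2 := congrArg (fun f => f v) (L_DL Δ c (-2) q)
    simp only [LinearMap.comp_apply] at h2 ⊢
    exact h2.symm
  rw [lhs_eq, hBv,
    show L (∑ᶠ i, g i) = ∑ᶠ i, L (g i) from AddMonoidHom.map_finsum L.toAddMonoidHom hgfin]
  have hLg : ∀ i : ℕ, L (g i) = ((-1 : ℂ) ^ i * cbin (-2) i) •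
      ((if q + (i : ℤ) = -1 then Δ (-2 - i) v else 0) -
        (if q + -2 - (i : ℤ) = -1 then Δ (i : ℤ) v else 0)) := by
    intro i
    simp only [hgdef, hLdef, map_smul, map_sub, L_DR hcu, L_TId_DR hcu]
  rw [finsum_congr hLg]
  rcases lt_trichotomy q 0 with hq | hq | hq
  · set i₀ : ℕ := (-1 - q).toNat with hi₀def
    have hi₀ : (i₀ : ℤ) = -1 - q := Int.toNat_of_nonneg (by omega)
    rw [finsum_eq_single _ i₀ ?_]
    · have e1 : q + (i₀ : ℤ) = -1 := by omega
      have e2 : ¬ (q + -2 - (i₀ : ℤ) = -1) := by omega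
      have e3 : (-2 : ℤ) - i₀ = q - 1 := by omega
      rw [if_pos e1, if_neg e2, sub_zero, e3, cbin_neg_two]
      have hc3 : ((i₀ : ℂ)) = -1 - (q : ℂ) := by exact_mod_cast congrArg (Int.cast : ℤ → ℂ) hi₀
      have : ((-1 : ℂ) ^ i₀ * ((-1 : ℂ) ^ i₀ * ((i₀ : ℂ) + 1))) = -(q : ℂ) := by
        rw [← mul_assoc, ← mul_pow, hc3]
        ring_nf
      rw [this]
      simp
    · intro x hx
      have e1 : ¬ (q + (x : ℤ) = -1) := by omega
      have e2 : ¬ (q + -2 - (x : ℤ) = -1) := by omega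
      rw [if_neg e1, if_neg e2, sub_zero, smul_zero]
  · subst hq
    rw [finsum_eq_zero_of_forall_eq_zero ?_]
    · simp
    · intro x
      have e1 : ¬ ((0 : ℤ) + (x : ℤ) = -1) := by omega
      have e2 : ¬ ((0 : ℤ) + -2 - (x : ℤ) = -1) := by omega
      rw [if_neg e1, if_neg e2, sub_zero, smul_zero]
  · set i₀ : ℕ := (q - 1).toNat with hi₀def
    have hi₀ : (i₀ : ℤ) = q - 1 := Int.toNat_of_nonneg (by omega)
    rw [finsum_eq_single _ i₀ ?_]
    · have e1 : ¬ (q + (i₀ : ℤ) = -1) := by omega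
      have e2 : q + -2 - (i₀ : ℤ) = -1 := by omega
      rw [if_neg e1, if_pos e2, zero_sub, cbin_neg_two, hi₀]
      have hc3 : ((i₀ : ℂ)) = (q : ℂ) - 1 := by exact_mod_cast congrArg (Int.cast : ℤ → ℂ) hi₀
      have : ((-1 : ℂ) ^ i₀ * ((-1 : ℂ) ^ i₀ * ((i₀ : ℂ) + 1))) = (q : ℂ) := by
        rw [← mul_assoc, ← mul_pow, hc3]
        ring_nf
      rw [smul_neg, this]
      simp
    · intro x hx
      have e1 : ¬ (q + (x : ℤ) = -1) := by omega
      have e2 : ¬ (q + -2 - (x : ℤ) = -1) := by omega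
      rw [if_neg e1, if_neg e2, sub_zero, smul_zero]

end
end

section
/- Suppose Δ satisfies truncation, and let D* : V → V be a ℂ-linear map satisfying the D* formula and coefficient Co-Skew symmetry. Then the conjugation formula holds: for every m ∈ ℤ and every i ≥ 0, Σ_{a+b=i, a,b≥0} (−1)^b (Id ⊗ D*^{(b)}) ∘ Δ_m ∘ D*^{(a)} = (−1)^i C(m,i) · Δ_{m−i} as maps V → V ⊗ V. -/
open TensorProduct

noncomputable section

variable {V : Type*} [AddCommGroup V] [Module ℂ V]

lemma Tflip_Tflip (x : V ⊗[ℂ] V) : Tflip (Tflip x) = x := by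
  have : (Tflip ∘ₗ Tflip : V ⊗[ℂ] V →ₗ[ℂ] V ⊗[ℂ] V) = LinearMap.id := by
    apply TensorProduct.ext'
    intro u w
    simp [Tflip]
  simpa using congrArg (fun f => f x) this

lemma Tflip_map (f g : V →ₗ[ℂ] V) (x : V ⊗[ℂ] V) :
    Tflip (TensorProduct.map f g x) = TensorProduct.map g f (Tflip x) := by
  have : (Tflip ∘ₗ TensorProduct.map f g : V ⊗[ℂ] V →ₗ[ℂ] V ⊗[ℂ] V)
      = TensorProduct.map g f ∘ₗ Tflip := by
    apply TensorProduct.ext'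
    intro u w
    simp [Tflip]
  simpa using congrArg (fun F => F x) this

lemma dpow_comp_D (D : V →ₗ[ℂ] V) (b : ℕ) :
    dpow D b ∘ₗ D = ((b+1 : ℕ) : ℂ) • dpow D (b+1) := by
  ext v
  simp only [dpow, LinearMap.comp_apply, LinearMap.smul_apply, pow_succ, Nat.factorial_succ]
  rw [Module.End.mul_apply, smul_smul]
  congr 1
  have h1 : ((b : ℂ) + 1) ≠ 0 := Nat.cast_add_one_ne_zero b
  have h2 : ((b.factorial : ℕ) : ℂ) ≠ 0 := Nat.cast_ne_zero.mpr b.factorial_ne_zero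
  push_cast
  field_simp

lemma bound_of_finite {s : Set ℕ} (h : s.Finite) : ∃ N, ∀ i, N ≤ i → i ∉ s := by
  obtain ⟨N, hN⟩ := h.bddAbove
  exact ⟨N + 1, fun i hi hmem => by have := hN hmem; omega⟩

lemma neg_one_zpow_succ (t : ℤ) : (-1 : ℂ) ^ (t + 1) = -(-1 : ℂ) ^ t := by
  rw [zpow_add_one₀ (by norm_num : (-1 : ℂ) ≠ 0)]
  ring

lemma key (Δ : ℤ → V →ₗ[ℂ] V ⊗[ℂ] V) (D : V →ₗ[ℂ] V)
    (hD : DstFormula Δ D) (hsk : CoSkew Δ D) (m : ℤ) :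
    TensorProduct.map LinearMap.id D ∘ₗ Δ m = Δ m ∘ₗ D + (m : ℂ) • Δ (m - 1) := by
  ext v
  have hinj : Function.Injective (Tflip : V ⊗[ℂ] V →ₗ[ℂ] V ⊗[ℂ] V) :=
    Function.LeftInverse.injective Tflip_Tflip
  apply hinj
  obtain ⟨N1, hN1⟩ := bound_of_finite (hsk m v).1
  obtain ⟨N2, hN2⟩ := bound_of_finite (hsk (m - 1) v).1
  obtain ⟨N3, hN3⟩ := bound_of_finite (hsk m (D v)).1
  set N := max N1 (max N2 N3) with hN
  have z1 : ∀ i, N ≤ i → Δ (m + i) (dpow D i v) = 0 := by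
    intro i hi
    have := hN1 i (le_trans (le_max_left _ _) hi)
    simpa [Set.mem_setOf_eq, not_not] using this
  have z2 : ∀ i, N ≤ i → Δ (m + i - 1) (dpow D i v) = 0 := by
    intro i hi
    have := hN2 i (le_trans (le_trans (le_max_left _ _) (le_max_right N1 _)) hi)
    simp only [Set.mem_setOf_eq, not_not] at this
    rw [show m + (i : ℤ) - 1 = m - 1 + i by ring]
    exact this
  have z3 : ∀ i, N ≤ i → Δ (m + i) (dpow D i (D v)) = 0 := by
    intro i hi
    have := hN3 i (le_trans (le_trans (le_max_right _ _) (le_max_right N1 _)) hi)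
    simpa [Set.mem_setOf_eq, not_not] using this
  -- finsum -> finite sums
  have e1 : Tflip (Δ m v)
      = ∑ i ∈ Finset.range N, (-1 : ℂ) ^ (m + 1 + (i : ℤ)) • Δ (m + i) (dpow D i v) := by
    rw [(hsk m v).2]
    apply finsum_eq_sum_of_support_subset
    intro i hi
    simp only [Function.mem_support] at hi
    by_contra h
    simp only [Finset.coe_range, Set.mem_Iio, not_lt] at h
    exact hi (by rw [z1 i h, smul_zero])
  have e2 : Tflip (Δ (m - 1) v)
      = ∑ i ∈ Finset.range N, (-1 : ℂ) ^ (m + (i : ℤ)) • Δ (m + i - 1) (dpow D i v) := by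
    rw [(hsk (m - 1) v).2]
    have econv : ∀ i : ℕ, (-1 : ℂ) ^ (m - 1 + 1 + (i : ℤ)) • Δ (m - 1 + i) (dpow D i v)
        = (-1 : ℂ) ^ (m + (i : ℤ)) • Δ (m + i - 1) (dpow D i v) := by
      intro i
      rw [show m - 1 + 1 + (i : ℤ) = m + i by ring, show m - 1 + (i : ℤ) = m + i - 1 by ring]
    simp only [econv]
    apply finsum_eq_sum_of_support_subset
    intro i hi
    simp only [Function.mem_support] at hi
    by_contra h
    simp only [Finset.coe_range, Set.mem_Iio, not_lt] at h
    exact hi (by rw [z2 i h, smul_zero])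
  have e3 : Tflip (Δ m (D v))
      = ∑ i ∈ Finset.range N, (-1 : ℂ) ^ (m + 1 + (i : ℤ)) • Δ (m + i) (dpow D i (D v)) := by
    rw [(hsk m (D v)).2]
    apply finsum_eq_sum_of_support_subset
    intro i hi
    simp only [Function.mem_support] at hi
    by_contra h
    simp only [Finset.coe_range, Set.mem_Iio, not_lt] at h
    exact hi (by rw [z3 i h, smul_zero])
  -- the shifted summand
  set g : ℕ → V ⊗[ℂ] V :=
    fun j => ((-1 : ℂ) ^ (m + (j : ℤ)) * (j : ℂ)) • Δ (m + j - 1) (dpow D j v) with hg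
  have hg0 : g 0 = 0 := by simp [hg]
  -- per-term LHS computation
  have term_eq : ∀ i : ℕ,
      TensorProduct.map D LinearMap.id ((-1 : ℂ) ^ (m + 1 + (i : ℤ)) • Δ (m + i) (dpow D i v))
        = g i + ((m : ℂ) * (-1 : ℂ) ^ (m + (i : ℤ))) • Δ (m + i - 1) (dpow D i v) := by
    intro i
    rw [LinearMap.map_smul]
    have hq := congrArg (fun F => F (dpow D i v)) (hD (m + i))
    simp only [LinearMap.comp_apply, LinearMap.smul_apply] at hq
    rw [hq, hg]
    simp only []
    rw [smul_smul, ← add_smul]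
    congr 1
    rw [show m + 1 + (i : ℤ) = m + (i : ℤ) + 1 by ring, neg_one_zpow_succ]
    push_cast
    ring
  -- LHS
  have lhs_eq : Tflip ((TensorProduct.map LinearMap.id D ∘ₗ Δ m) v)
      = ∑ i ∈ Finset.range N,
          (g i + ((m : ℂ) * (-1 : ℂ) ^ (m + (i : ℤ))) • Δ (m + i - 1) (dpow D i v)) := by
    rw [LinearMap.comp_apply, Tflip_map, e1, map_sum]
    exact Finset.sum_congr rfl fun i _ => term_eq i
  rw [lhs_eq]
  -- RHS
  rw [LinearMap.add_apply, LinearMap.comp_apply, LinearMap.smul_apply, map_add,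
    LinearMap.map_smul, e2, e3]
  have shift : ∀ i : ℕ, (-1 : ℂ) ^ (m + 1 + (i : ℤ)) • Δ (m + i) (dpow D i (D v)) = g (i + 1) := by
    intro i
    have hdv : dpow D i (D v) = ((i + 1 : ℕ) : ℂ) • dpow D (i + 1) v := by
      have := congrArg (fun F => F v) (dpow_comp_D D i)
      simpa using this
    rw [hdv, LinearMap.map_smul, hg]
    simp only []
    rw [smul_smul]
    have c1 : (((i : ℕ) + 1 : ℕ) : ℤ) = (i : ℤ) + 1 := by push_cast; ring
    rw [c1]
    rw [show m + ((i : ℤ) + 1) - 1 = m + (i : ℤ) by ring_nf]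
    rw [show m + ((i : ℤ) + 1) = m + (i : ℤ) + 1 by ring, neg_one_zpow_succ,
      show m + 1 + (i : ℤ) = m + (i : ℤ) + 1 by ring, neg_one_zpow_succ]
    try (congr 1; push_cast; ring)
  simp only [shift]
  rw [show (∑ i ∈ Finset.range N, g (i + 1)) = ∑ i ∈ Finset.range (N + 1), g i by
    rw [Finset.sum_range_succ' g N, hg0, add_zero]]
  rw [show (∑ i ∈ Finset.range (N + 1), g i) = ∑ i ∈ Finset.range N, g i by
    rw [Finset.sum_range_succ, hg]
    simp only []
    rw [z2 N le_rfl, smul_zero, add_zero]]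
  rw [Finset.smul_sum, ← Finset.sum_add_distrib]
  refine Finset.sum_congr rfl fun i _ => ?_
  rw [smul_smul]

lemma cbin_zero_s11 (m : ℤ) : cbin m 0 = 1 := by simp [cbin]

lemma cbin_succ (m : ℤ) (n : ℕ) :
    cbin m (n + 1) = (m : ℂ) * cbin (m - 1) n / ((n : ℂ) + 1) := by
  unfold cbin
  rw [Finset.prod_range_succ']
  have h1 : ((n + 1 : ℕ).factorial : ℂ) = ((n : ℂ) + 1) * (n.factorial : ℂ) := by
    rw [Nat.factorial_succ]; push_cast; ring
  have h2 : (∏ k ∈ Finset.range n, ((m : ℂ) - ((k + 1 : ℕ) : ℂ)))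
      = ∏ k ∈ Finset.range n, ((((m : ℤ) - 1 : ℤ) : ℂ) - (k : ℂ)) := by
    refine Finset.prod_congr rfl fun k _ => ?_
    push_cast; ring
  rw [h1, h2]
  have hn : ((n : ℂ) + 1) ≠ 0 := Nat.cast_add_one_ne_zero n
  have hf : (n.factorial : ℂ) ≠ 0 := Nat.cast_ne_zero.mpr n.factorial_ne_zero
  field_simp
  ring

lemma dpow_zero (D : V →ₗ[ℂ] V) : dpow D 0 = LinearMap.id := by
  ext v; simp [dpow]

lemma D_comp_dpow (D : V →ₗ[ℂ] V) (j : ℕ) :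
    D ∘ₗ dpow D j = ((j + 1 : ℕ) : ℂ) • dpow D (j + 1) := by
  rw [← dpow_comp_D]
  ext v
  simp only [dpow, LinearMap.comp_apply, LinearMap.smul_apply, LinearMap.map_smul]
  congr 1
  rw [← Module.End.mul_apply, ← Module.End.mul_apply, ← pow_succ, ← pow_succ']

lemma map_id_dpow_comp (D : V →ₗ[ℂ] V) (b : ℕ) :
    TensorProduct.map (LinearMap.id : V →ₗ[ℂ] V) (dpow D b) ∘ₗ TensorProduct.map LinearMap.id D
      = ((b + 1 : ℕ) : ℂ) • TensorProduct.map (LinearMap.id : V →ₗ[ℂ] V) (dpow D (b + 1)) := by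
  apply TensorProduct.ext'
  intro u w
  have hw := congrArg (fun f => f w) (dpow_comp_D D b)
  simp only [LinearMap.comp_apply, LinearMap.smul_apply] at hw
  simp [hw, TensorProduct.tmul_smul]

theorem conjugation_of_coSkew (Δ : ℤ → V →ₗ[ℂ] V ⊗[ℂ] V) (htr : Truncation Δ)
    (D : V →ₗ[ℂ] V) (hD : DstFormula Δ D) (hsk : CoSkew Δ D) :
    ∀ (m : ℤ) (i : ℕ),
      (∑ ab ∈ Finset.HasAntidiagonal.antidiagonal i,
          ((-1 : ℂ) ^ ab.2) • (TensorProduct.map LinearMap.id (dpow D ab.2) ∘ₗ Δ m ∘ₗ dpow D ab.1)) =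
        ((-1 : ℂ) ^ i * cbin m i) • Δ (m - i) := by
  intro m i
  induction i generalizing m with
  | zero =>
    simp only [Finset.Nat.antidiagonal_zero, Finset.sum_singleton, pow_zero, cbin_zero_s11,
      Nat.cast_zero, sub_zero, one_smul, mul_one, dpow_zero, TensorProduct.map_id,
      LinearMap.id_comp, LinearMap.comp_id]
  | succ n IH =>
    set F : ℕ → (V →ₗ[ℂ] V ⊗[ℂ] V) := fun k =>
      ((-1 : ℂ) ^ (n + 1 - k)) •
        (TensorProduct.map LinearMap.id (dpow D (n + 1 - k)) ∘ₗ Δ m ∘ₗ dpow D k) with hF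
    set G : ℕ → (V →ₗ[ℂ] V ⊗[ℂ] V) := fun j =>
      ((-1 : ℂ) ^ (n - j)) •
        (TensorProduct.map LinearMap.id (dpow D (n - j)) ∘ₗ Δ (m - 1) ∘ₗ dpow D j) with hG
    set H : ℕ → (V →ₗ[ℂ] V ⊗[ℂ] V) := fun j =>
      (((n + 1 - j : ℕ) : ℂ) * (-1 : ℂ) ^ (n - j)) •
        (TensorProduct.map LinearMap.id (dpow D (n + 1 - j)) ∘ₗ Δ m ∘ₗ dpow D j) with hH
    have hrange : (∑ ab ∈ Finset.HasAntidiagonal.antidiagonal (n + 1),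
        ((-1 : ℂ) ^ ab.2) • (TensorProduct.map LinearMap.id (dpow D ab.2) ∘ₗ Δ m ∘ₗ dpow D ab.1))
        = ∑ k ∈ Finset.range (n + 2), F k :=
      Finset.Nat.sum_antidiagonal_eq_sum_range_succ_mk _ (n + 1)
    rw [hrange]
    have hGsum : (∑ j ∈ Finset.range (n + 1), G j)
        = ((-1 : ℂ) ^ n * cbin (m - 1) n) • Δ (m - 1 - n) := by
      rw [← Finset.Nat.sum_antidiagonal_eq_sum_range_succ_mk
        (fun p : ℕ × ℕ => ((-1 : ℂ) ^ p.2) •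
          (TensorProduct.map LinearMap.id (dpow D p.2) ∘ₗ Δ (m - 1) ∘ₗ dpow D p.1))]
      exact IH (m - 1)
    have hA : ∀ j, j ≤ n → (((j + 1 : ℕ)) : ℂ) • F (j + 1) = H j - (m : ℂ) • G j := by
      intro j hj
      have h1 : n + 1 - (j + 1) = n - j := by omega
      have h2 : n - j + 1 = n + 1 - j := by omega
      ext v
      simp only [hF, hH, hG, h1, LinearMap.smul_apply, LinearMap.comp_apply, LinearMap.sub_apply]
      have hdv : ((j + 1 : ℕ) : ℂ) • dpow D (j + 1) v = D (dpow D j v) := by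
        have := congrArg (fun f => f v) (D_comp_dpow D j)
        simp only [LinearMap.comp_apply, LinearMap.smul_apply] at this
        exact this.symm
      rw [smul_comm, ← LinearMap.map_smul, ← (Δ m).map_smul, hdv]
      have hk := congrArg (fun f => f (dpow D j v)) (key Δ D hD hsk m)
      simp only [LinearMap.comp_apply, LinearMap.add_apply, LinearMap.smul_apply] at hk
      have hk' : Δ m (D (dpow D j v))
          = TensorProduct.map LinearMap.id D (Δ m (dpow D j v)) - (m : ℂ) • Δ (m - 1) (dpow D j v) := by
        rw [hk]; abel
      rw [hk', map_sub, LinearMap.map_smul]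
      have hmc := congrArg (fun f => f (Δ m (dpow D j v))) (map_id_dpow_comp D (n - j))
      simp only [LinearMap.comp_apply, LinearMap.smul_apply] at hmc
      rw [hmc, h2]
      rw [smul_sub, smul_smul, smul_comm ((-1 : ℂ) ^ (n - j)) ((m : ℂ))]
      rw [mul_comm ((-1 : ℂ) ^ (n - j)) (((n + 1 - j : ℕ)) : ℂ)]
    have hB : ∀ j, j ≤ n → (((n + 1 - j : ℕ)) : ℂ) • F j = -H j := by
      intro j hj
      have h3 : n + 1 - j = (n - j) + 1 := by omega
      ext v
      simp only [hF, hH, LinearMap.smul_apply, LinearMap.neg_apply]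
      rw [smul_smul, ← neg_smul]
      congr 1
      rw [h3, pow_succ]
      ring
    have hsum : ((n + 1 : ℕ) : ℂ) • (∑ k ∈ Finset.range (n + 2), F k)
        = (-(m : ℂ)) • ∑ j ∈ Finset.range (n + 1), G j := by
      rw [Finset.smul_sum]
      have split : ∀ k ∈ Finset.range (n + 2),
          ((n + 1 : ℕ) : ℂ) • F k = (k : ℂ) • F k + ((n + 1 - k : ℕ) : ℂ) • F k := by
        intro k hk
        rw [← add_smul]
        congr 1
        have hk' : k ≤ n + 1 := by
          simp only [Finset.mem_range] at hk; omega
        rw [Nat.cast_sub hk']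
        push_cast
        ring
      rw [Finset.sum_congr rfl split, Finset.sum_add_distrib]
      rw [Finset.sum_range_succ' (fun k => (k : ℂ) • F k) (n + 1)]
      simp only [Nat.cast_zero, zero_smul, add_zero]
      rw [Finset.sum_range_succ (fun k => ((n + 1 - k : ℕ) : ℂ) • F k) (n + 1)]
      simp only [Nat.sub_self, Nat.cast_zero, zero_smul, add_zero]
      have e1 : ∀ j ∈ Finset.range (n + 1),
          (((j + 1 : ℕ)) : ℂ) • F (j + 1) = H j - (m : ℂ) • G j := by
        intro j hj
        exact hA j (by simp only [Finset.mem_range] at hj; omega)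
      have e2 : ∀ j ∈ Finset.range (n + 1), (((n + 1 - j : ℕ)) : ℂ) • F j = -H j := by
        intro j hj
        exact hB j (by simp only [Finset.mem_range] at hj; omega)
      rw [Finset.sum_congr rfl e1, Finset.sum_congr rfl e2, Finset.sum_sub_distrib]
      rw [Finset.sum_neg_distrib, ← Finset.smul_sum]
      module
    have hne : ((n + 1 : ℕ) : ℂ) ≠ 0 := Nat.cast_ne_zero.mpr (Nat.succ_ne_zero n)
    have hfin := congrArg (fun x => ((n + 1 : ℕ) : ℂ)⁻¹ • x) hsum
    simp only [smul_smul, inv_mul_cancel₀ hne, one_smul] at hfin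
    rw [hfin, hGsum]
    rw [show m - ((n + 1 : ℕ) : ℤ) = m - 1 - (n : ℕ) by push_cast; ring]
    rw [smul_smul]
    congr 1
    have hne2 : ((n : ℂ) + 1) ≠ 0 := Nat.cast_add_one_ne_zero n
    rw [cbin_succ, pow_succ, mul_comm ((-1 : ℂ) ^ n) (-1 : ℂ)]
    rw [show ((n + 1 : ℕ) : ℂ) = (n : ℂ) + 1 by push_cast; ring]
    rw [div_eq_mul_inv]
    field_simp


end
end
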